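/- Let G_1 and G_2 be finite simple graphs sharing the vertex set I = V(G_1) ∩ V(G_2) and the edges induced by I. If G_1 and G_2 are simultaneous interval graphs, then there exist clique orderings O_1 = Q_1, …, Q_l of G_1 and O_2 = Q'_1, …, Q'_l of G_2 of the same length such that for every vertex v ∈ I and every index i, v ∈ Q_i if and only if v ∈ Q'_i. -/

import Mathlib

/-!
Sweep a point `p` across the line through all left endpoints of both representations, in
increasing order, and record at each stop the vertices whose interval contains `p`. Each
such set is a clique; a maximal clique is the set recorded at the largest left endpoint of
its members, since pairwise intersecting intervals all contain that point; and a vertex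
is recorded at consecutive stops because its interval is convex. As a vertex of `V1 ∩ V2`
has the same interval in both representations, it is recorded at the same stops in both.
-/

variable {U : Type*}

/-- `Q` is a maximal clique of `G` among the cliques contained in the
vertex set `W`; i.e. a maximal clique of the induced subgraph `G[W]`. -/
def IsMaxCliqueOn (G : SimpleGraph U) (W : Finset U) (Q : Finset U) : Prop :=
  Q ⊆ W ∧ G.IsClique (Q : Set U) ∧
    ∀ R : Finset U, R ⊆ W → G.IsClique (R : Set U) → Q ⊆ R → Q = R

/-- `S` is a clique ordering of the graph `G` regarded as a graph on the vertex
set `W`: a finite sequence of (possibly empty) cliques contained in `W`,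
containing every maximal clique of `G[W]`, in which the indices of cliques
containing any fixed vertex are consecutive. -/
def IsCliqueOrderingOn (G : SimpleGraph U) (W : Finset U) (S : List (Finset U)) : Prop :=
  (∀ Q ∈ S, Q ⊆ W ∧ G.IsClique (Q : Set U)) ∧
  (∀ Q : Finset U, IsMaxCliqueOn G W Q → Q ∈ S) ∧
  (∀ v : U, ∀ i j k : ℕ, i ≤ j → j ≤ k → k < S.length →
    v ∈ S.getD i ∅ → v ∈ S.getD k ∅ → v ∈ S.getD j ∅)

/-- `G1` (on vertex set `V1`) and `G2` (on vertex set `V2`) are simultaneous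
interval graphs: they admit interval representations (by nonempty closed real
intervals, adjacency iff intersecting) that assign the same interval to every
vertex of `I = V1 ∩ V2`. -/
def SimultaneousIntervalGraphs [DecidableEq U] (V1 V2 : Finset U) (G1 G2 : SimpleGraph U) : Prop :=
  ∃ a1 b1 a2 b2 : U → ℝ,
    (∀ v ∈ V1, a1 v ≤ b1 v) ∧ (∀ v ∈ V2, a2 v ≤ b2 v) ∧
    (∀ u ∈ V1, ∀ v ∈ V1, u ≠ v →
      (G1.Adj u v ↔ (Set.Icc (a1 u) (b1 u) ∩ Set.Icc (a1 v) (b1 v)).Nonempty)) ∧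
    (∀ u ∈ V2, ∀ v ∈ V2, u ≠ v →
      (G2.Adj u v ↔ (Set.Icc (a2 u) (b2 u) ∩ Set.Icc (a2 v) (b2 v)).Nonempty)) ∧
    (∀ v ∈ V1 ∩ V2, a1 v = a2 v ∧ b1 v = b2 v)

theorem List.getD_map_of_lt {α β : Type*} (f : α → β) {l : List α} {i : ℕ} (d : β)
    (hi : i < l.length) : (l.map f).getD i d = f l[i] := by
  rw [List.getD_eq_getElem _ _ (by simpa using hi), List.getElem_map]

structure IsIntervalRep (G : SimpleGraph U) (V : Finset U) (a b : U → ℝ) : Prop where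
  left_le_right : ∀ v ∈ V, a v ≤ b v
  adj_iff : ∀ u ∈ V, ∀ v ∈ V, u ≠ v →
    (G.Adj u v ↔ (Set.Icc (a u) (b u) ∩ Set.Icc (a v) (b v)).Nonempty)

noncomputable def pointClique (V : Finset U) (a b : U → ℝ) (p : ℝ) : Finset U :=
  {v ∈ V | a v ≤ p ∧ p ≤ b v}

section pointClique

variable {G : SimpleGraph U} {V Q : Finset U} {a b : U → ℝ}

@[simp]
theorem mem_pointClique {p : ℝ} {v : U} :
    v ∈ pointClique V a b p ↔ v ∈ V ∧ a v ≤ p ∧ p ≤ b v :=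
  Finset.mem_filter

theorem pointClique_subset (p : ℝ) : pointClique V a b p ⊆ V :=
  Finset.filter_subset _ _

theorem mem_pointClique_of_le_of_le {p q r : ℝ} {v : U} (hp : v ∈ pointClique V a b p)
    (hr : v ∈ pointClique V a b r) (hpq : p ≤ q) (hqr : q ≤ r) :
    v ∈ pointClique V a b q := by
  rw [mem_pointClique] at *
  exact ⟨hp.1, hp.2.1.trans hpq, hqr.trans hr.2.2⟩

theorem IsIntervalRep.isClique_pointClique (h : IsIntervalRep G V a b) (p : ℝ) :
    G.IsClique (pointClique V a b p : Set U) := by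
  intro u hu v hv huv
  rw [Finset.mem_coe, mem_pointClique] at hu hv
  exact (h.adj_iff u hu.1 v hv.1 huv).2 ⟨p, ⟨hu.2.1, hu.2.2⟩, ⟨hv.2.1, hv.2.2⟩⟩

/-- Helly property for intervals. -/
theorem IsIntervalRep.subset_pointClique_of_isClique (h : IsIntervalRep G V a b)
    (hQV : Q ⊆ V) (hQ : G.IsClique (Q : Set U)) {w : U} (hw : w ∈ Q)
    (hmax : ∀ v ∈ Q, a v ≤ a w) : Q ⊆ pointClique V a b (a w) := by
  intro v hv
  refine mem_pointClique.2 ⟨hQV hv, hmax v hv, ?_⟩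
  obtain rfl | hwv := eq_or_ne w v
  · exact h.left_le_right w (hQV hv)
  · obtain ⟨x, hxw, hxv⟩ := (h.adj_iff w (hQV hw) v (hQV hv) hwv).1 (hQ hw hv hwv)
    exact hxw.1.trans hxv.2

theorem IsIntervalRep.exists_eq_pointClique_of_isMaxCliqueOn (h : IsIntervalRep G V a b)
    (hQ : IsMaxCliqueOn G V Q) (hne : Q.Nonempty) : ∃ w ∈ V, Q = pointClique V a b (a w) := by
  obtain ⟨w, hw, hmax⟩ := Q.exists_max_image a hne
  refine ⟨w, hQ.1 hw, hQ.2.2 _ (pointClique_subset _) (h.isClique_pointClique _) ?_⟩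
  exact h.subset_pointClique_of_isClique hQ.1 hQ.2.1 hw hmax

theorem IsIntervalRep.isCliqueOrderingOn_map_pointClique (h : IsIntervalRep G V a b)
    {P : List ℝ} (hPs : P.SortedLE) (hP : ∀ v ∈ V, a v ∈ P) (hPne : P ≠ []) :
    IsCliqueOrderingOn G V (P.map (pointClique V a b)) := by
  refine ⟨?_, ?_, ?_⟩
  · intro Q hQ
    obtain ⟨p, -, rfl⟩ := List.mem_map.1 hQ
    exact ⟨pointClique_subset p, h.isClique_pointClique p⟩
  · intro Q hQ
    rcases Q.eq_empty_or_nonempty with rfl | hne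
    · obtain ⟨p, hp⟩ := List.exists_mem_of_ne_nil P hPne
      rw [hQ.2.2 _ (pointClique_subset p) (h.isClique_pointClique p) (Finset.empty_subset _)]
      exact List.mem_map_of_mem hp
    · obtain ⟨w, hw, rfl⟩ := h.exists_eq_pointClique_of_isMaxCliqueOn hQ hne
      exact List.mem_map_of_mem (hP w hw)
  · intro v i j k hij hjk hk hvi hvk
    rw [List.length_map] at hk
    have hj : j < P.length := hjk.trans_lt hk
    have hi : i < P.length := hij.trans_lt hj
    rw [List.getD_map_of_lt _ _ hi] at hvi
    rw [List.getD_map_of_lt _ _ hk] at hvk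
    rw [List.getD_map_of_lt _ _ hj]
    exact mem_pointClique_of_le_of_le hvi hvk (hPs.getElem_le_getElem_of_le hij)
      (hPs.getElem_le_getElem_of_le hjk)

end pointClique

theorem agreeing_orderings_of_simultaneous_general {U : Type*} [DecidableEq U]
    (V1 V2 : Finset U) (G1 G2 : SimpleGraph U)
    (hsim : SimultaneousIntervalGraphs V1 V2 G1 G2) :
    ∃ O1 O2 : List (Finset U),
      IsCliqueOrderingOn G1 V1 O1 ∧ IsCliqueOrderingOn G2 V2 O2 ∧
      O1.length = O2.length ∧
      ∀ v ∈ V1 ∩ V2, ∀ i : ℕ, i < O1.length →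
        (v ∈ O1.getD i ∅ ↔ v ∈ O2.getD i ∅) := by
  obtain ⟨a1, b1, a2, b2, hle1, hle2, hadj1, hadj2, hagree⟩ := hsim
  -- `0` only keeps `P` nonempty when both vertex sets are empty.
  set P : List ℝ := (insert 0 (V1.image a1 ∪ V2.image a2)).sort with hP
  have hPs : P.SortedLE := (Finset.pairwise_sort _ _).sortedLE
  have hPne : P ≠ [] := List.ne_nil_of_mem (a := 0) (by simp [hP])
  refine ⟨P.map (pointClique V1 a1 b1), P.map (pointClique V2 a2 b2),
    IsIntervalRep.isCliqueOrderingOn_map_pointClique ⟨hle1, hadj1⟩ hPs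
      (fun v hv => by simp [hP, Finset.mem_image_of_mem a1 hv]) hPne,
    IsIntervalRep.isCliqueOrderingOn_map_pointClique ⟨hle2, hadj2⟩ hPs
      (fun v hv => by simp [hP, Finset.mem_image_of_mem a2 hv]) hPne,
    by simp, fun v hv i hi => ?_⟩
  rw [List.length_map] at hi
  obtain ⟨hv1, hv2⟩ := Finset.mem_inter.1 hv
  simp only [List.getD_map_of_lt _ _ hi, mem_pointClique, (hagree v hv).1, (hagree v hv).2, hv1,
    hv2, true_and]

/-- If two graphs sharing the vertex set `I = V1 ∩ V2` (and its induced edges)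
are simultaneous interval graphs, then they admit clique orderings of the same
length that agree on `I` position-wise. -/
theorem agreeing_orderings_of_simultaneous {U : Type*} [Fintype U] [DecidableEq U]
    (V1 V2 : Finset U) (G1 G2 : SimpleGraph U)
    (hG1 : ∀ u v : U, G1.Adj u v → u ∈ V1 ∧ v ∈ V1)
    (hG2 : ∀ u v : U, G2.Adj u v → u ∈ V2 ∧ v ∈ V2)
    (hI : ∀ u ∈ V1 ∩ V2, ∀ v ∈ V1 ∩ V2, G1.Adj u v ↔ G2.Adj u v)
    (hsim : SimultaneousIntervalGraphs V1 V2 G1 G2) :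
    ∃ O1 O2 : List (Finset U),
      IsCliqueOrderingOn G1 V1 O1 ∧ IsCliqueOrderingOn G2 V2 O2 ∧
      O1.length = O2.length ∧
      ∀ v ∈ V1 ∩ V2, ∀ i : ℕ, i < O1.length →
        (v ∈ O1.getD i ∅ ↔ v ∈ O2.getD i ∅) :=
  agreeing_orderings_of_simultaneous_general V1 V2 G1 G2 hsim
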